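/- arXiv:2004.05206 — 2 statements merged into one kernel-verified Lean document; each statement's English description precedes it below -/
import Mathlib

section
/- Let 0<p<1, a,b>0 and C>1. Set ε := (C−1)/(C·a·b) and δ := ((C−1)/C)·ε^{p/(1−p)}. Let A ⊆ ℕ be finite, and for each n ∈ A let x_n ∈ ℓ_p with ‖x_n‖_p ≤ a and let x_n* be a bounded linear functional on ℓ_p with ‖x_n*‖ ≤ b and x_n*(x_n) = 1. Let Ω := { j ∈ ℕ : there is n ∈ A with |x_n*(e_j)·x_n(j)| ≥ δ }. Then |A| ≤ C · Σ_{j∈Ω} | Σ_{n∈A} x_n*(e_j)·x_n(j) |. -/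
open scoped BigOperators

/-- For `0 < p < 1`, membership in `ℓ_p`: the sequence `(|f j|^p)_j` is summable. -/
def MemLpSeq (p : ℝ) (f : ℕ → ℝ) : Prop := Summable fun j => |f j| ^ p

/-- The `p`-norm `‖f‖_p = (∑_j |f j|^p)^(1/p)`. -/
noncomputable def pNorm (p : ℝ) (f : ℕ → ℝ) : ℝ := (∑' j, |f j| ^ p) ^ (1 / p)

/-- The unit vector system `e_j` of `ℓ_p`. -/
noncomputable def unitVec (j : ℕ) : ℕ → ℝ := fun i => if i = j then 1 else 0

/-! Write `g_n(j) = x_n^*(e_j) x_n(j)`. Since the truncations of `x_n` converge to `x_n` in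
the `p`-norm and `x_n^*` is bounded, `∑_j g_n(j) = x_n^*(x_n) = 1`. Off `Ω` every `|g_n(j)|` is
below `δ`, so there `|g_n(j)| ≤ δ^(1-p) |g_n(j)|^p`, and the part of the sum outside `Ω` is at
most `δ^(1-p) ‖g_n‖_p^p ≤ δ^(1-p) (ab)^p = (C-1)/C`; `δ` is chosen to make this an equality.
Hence `∑_{j ∈ Ω} g_n(j) ≥ 1/C`, and summing over `n ∈ A` gives
`|A|/C ≤ ∑_{j ∈ Ω} |∑_n g_n(j)|`. -/

open Filter Topology

variable {p : ℝ}

lemma MemLpSeq.of_abs_le (hp : 0 ≤ p) {f g : ℕ → ℝ} (hg : MemLpSeq p g)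
    (h : ∀ j, |f j| ≤ |g j|) : MemLpSeq p f :=
  hg.of_nonneg_of_le (fun _ => by positivity) fun j => Real.rpow_le_rpow (abs_nonneg _) (h j) hp

lemma MemLpSeq.indicator (hp : 0 ≤ p) {f : ℕ → ℝ} (hf : MemLpSeq p f) (s : Set ℕ) :
    MemLpSeq p (s.indicator f) :=
  hf.of_abs_le hp fun j => by by_cases hj : j ∈ s <;> simp [hj]

lemma MemLpSeq.const_mul {f : ℕ → ℝ} (hf : MemLpSeq p f) (c : ℝ) :
    MemLpSeq p fun j => c * f j :=
  (hf.mul_left (|c| ^ p)).congr fun j => by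
    rw [abs_mul, Real.mul_rpow (abs_nonneg _) (abs_nonneg _)]

lemma MemLpSeq.mul_of_abs_le (hp : 0 ≤ p) {c f : ℕ → ℝ} {b : ℝ} (hf : MemLpSeq p f)
    (hc : ∀ j, |c j| ≤ b) : MemLpSeq p fun j => c j * f j :=
  (hf.const_mul b).of_abs_le hp fun j => by
    rw [abs_mul, abs_mul]
    exact mul_le_mul_of_nonneg_right ((hc j).trans (le_abs_self b)) (abs_nonneg _)

lemma abs_unitVec_rpow (hp : 0 < p) (i j : ℕ) : |unitVec i j| ^ p = if j = i then 1 else 0 := by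
  by_cases h : j = i <;> simp [unitVec, h, Real.zero_rpow hp.ne']

lemma memLpSeq_unitVec (hp : 0 < p) (i : ℕ) : MemLpSeq p (unitVec i) := by
  simpa only [MemLpSeq, abs_unitVec_rpow hp] using (hasSum_ite_eq i (1 : ℝ)).summable

lemma pNorm_unitVec (hp : 0 < p) (i : ℕ) : pNorm p (unitVec i) = 1 := by
  simp only [pNorm, abs_unitVec_rpow hp, (hasSum_ite_eq i (1 : ℝ)).tsum_eq, Real.one_rpow]

lemma pNorm_nonneg (f : ℕ → ℝ) : 0 ≤ pNorm p f :=
  Real.rpow_nonneg (tsum_nonneg fun _ => by positivity) _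

lemma pNorm_rpow_eq_tsum (hp : 0 < p) (f : ℕ → ℝ) : pNorm p f ^ p = ∑' j, |f j| ^ p := by
  rw [pNorm, one_div, Real.rpow_inv_rpow (tsum_nonneg fun _ => by positivity) hp.ne']

lemma tendsto_pNorm_indicator_compl (hp : 0 < p) (y : ℕ → ℝ) :
    Tendsto (fun s : Finset ℕ => pNorm p ((s : Set ℕ)ᶜ.indicator y)) atTop (𝓝 0) := by
  have htail : Tendsto (fun s : Finset ℕ => ∑' j, |(s : Set ℕ)ᶜ.indicator y j| ^ p)
      atTop (𝓝 0) := by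
    refine (tendsto_tsum_compl_atTop_zero fun j => |y j| ^ p).congr fun s => ?_
    refine (tsum_subtype ((s : Set ℕ)ᶜ) fun j => |y j| ^ p).trans (tsum_congr fun j => ?_)
    by_cases hj : j ∈ (s : Set ℕ)ᶜ <;> simp [hj, Real.zero_rpow hp.ne']
  have h := htail.rpow_const (p := 1 / p) (Or.inr (by positivity))
  rwa [Real.zero_rpow (by positivity)] at h

lemma apply_indicator_finset_eq_sum (hp : 0 < p) {φ : (ℕ → ℝ) → ℝ}
    (hadd : ∀ f g, MemLpSeq p f → MemLpSeq p g → φ (f + g) = φ f + φ g)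
    (hsmul : ∀ (c : ℝ) f, MemLpSeq p f → φ (fun j => c * f j) = c * φ f)
    {y : ℕ → ℝ} (hy : MemLpSeq p y) (s : Finset ℕ) :
    φ ((s : Set ℕ).indicator y) = ∑ j ∈ s, φ (unitVec j) * y j := by
  classical
  induction s using Finset.induction_on with
  | empty => simpa using hsmul 0 y hy
  | insert i s hi ih =>
    have hsplit : ((insert i s : Finset ℕ) : Set ℕ).indicator y
        = (s : Set ℕ).indicator y + fun j => y i * unitVec i j := by
      funext j
      by_cases hj : j = i
      · subst hj; simp [unitVec, hi]
      · simp [unitVec, Set.indicator_apply, hj]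
    rw [hsplit, hadd _ _ (hy.indicator hp.le _) ((memLpSeq_unitVec hp i).const_mul _),
      hsmul _ _ (memLpSeq_unitVec hp i), ih, Finset.sum_insert hi]
    ring

lemma hasSum_apply_unitVec_mul (hp : 0 < p) {φ : (ℕ → ℝ) → ℝ} {b : ℝ}
    (hadd : ∀ f g, MemLpSeq p f → MemLpSeq p g → φ (f + g) = φ f + φ g)
    (hsmul : ∀ (c : ℝ) f, MemLpSeq p f → φ (fun j => c * f j) = c * φ f)
    (hbdd : ∀ f, MemLpSeq p f → |φ f| ≤ b * pNorm p f)
    {y : ℕ → ℝ} (hy : MemLpSeq p y) :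
    HasSum (fun j => φ (unitVec j) * y j) (φ y) := by
  have hdist : ∀ s : Finset ℕ, ‖∑ j ∈ s, φ (unitVec j) * y j - φ y‖
      ≤ b * pNorm p ((s : Set ℕ)ᶜ.indicator y) := by
    intro s
    have hsplit := hadd _ _ (hy.indicator hp.le s) (hy.indicator hp.le (s : Set ℕ)ᶜ)
    rw [Set.indicator_self_add_compl, apply_indicator_finset_eq_sum hp hadd hsmul hy] at hsplit
    rw [hsplit, sub_add_cancel_left, norm_neg, Real.norm_eq_abs]
    exact hbdd _ (hy.indicator hp.le _)
  show Tendsto (fun s : Finset ℕ => ∑ j ∈ s, φ (unitVec j) * y j) atTop (𝓝 (φ y))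
  rw [tendsto_iff_norm_sub_tendsto_zero]
  refine squeeze_zero (fun s => norm_nonneg _) hdist ?_
  simpa using (tendsto_pNorm_indicator_compl hp y).const_mul b

lemma tsum_abs_mul_rpow_le (hp : 0 < p) {c f : ℕ → ℝ} {b : ℝ} (hc : ∀ j, |c j| ≤ b)
    (hf : MemLpSeq p f) : ∑' j, |c j * f j| ^ p ≤ (b * pNorm p f) ^ p := by
  have hb : 0 ≤ b := (abs_nonneg _).trans (hc 0)
  rw [Real.mul_rpow hb (pNorm_nonneg f), pNorm_rpow_eq_tsum hp, ← tsum_mul_left]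
  refine Summable.tsum_le_tsum (fun j => ?_) (hf.mul_of_abs_le hp.le hc) (hf.mul_left _)
  rw [abs_mul, ← Real.mul_rpow hb (abs_nonneg _)]
  gcongr
  exact hc j

lemma tsum_indicator_abs_le_rpow_mul (hp : p ≤ 1) {h : ℕ → ℝ} (hh : MemLpSeq p h)
    {s : Set ℕ} {δ : ℝ} (hδ : 0 ≤ δ) (hs : ∀ j ∈ s, |h j| ≤ δ) :
    ∑' j, s.indicator (fun j => |h j|) j ≤ δ ^ (1 - p) * ∑' j, |h j| ^ p := by
  have hle : ∀ j, s.indicator (fun j => |h j|) j ≤ δ ^ (1 - p) * |h j| ^ p := by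
    intro j
    by_cases hj : j ∈ s
    · rw [Set.indicator_of_mem hj]
      calc |h j| = |h j| ^ (1 - p) * |h j| ^ p := by
            rw [← Real.rpow_add' (abs_nonneg _) (by norm_num), sub_add_cancel, Real.rpow_one]
        _ ≤ δ ^ (1 - p) * |h j| ^ p := by
            gcongr
            exact hs j hj
    · rw [Set.indicator_of_notMem hj]
      positivity
  rw [← tsum_mul_left]
  have hnonneg : ∀ j, 0 ≤ s.indicator (fun j => |h j|) j :=
    Set.indicator_nonneg fun _ _ => abs_nonneg _
  exact Summable.tsum_le_tsum hle ((hh.mul_left _).of_nonneg_of_le hnonneg hle) (hh.mul_left _)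

lemma card_mul_one_sub_le_tsum_indicator {ι κ : Type*} {A : Finset ι} {g : ι → κ → ℝ}
    (Ω : Set κ) {η : ℝ} (hg : ∀ n ∈ A, HasSum (g n) 1)
    (hsmall : ∀ n ∈ A, ∑' j, Ωᶜ.indicator (fun j => |g n j|) j ≤ η) :
    A.card * (1 - η) ≤ ∑' j, Ω.indicator (fun j => |∑ n ∈ A, g n j|) j := by
  set G := fun j => ∑ n ∈ A, g n j
  have hG : HasSum G A.card := by simpa using hasSum_sum hg
  have hcompl : ∑' j, Ωᶜ.indicator G j ≤ A.card * η := calc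
    ∑' j, Ωᶜ.indicator G j = ∑' j, ∑ n ∈ A, Ωᶜ.indicator (g n) j :=
        tsum_congr fun j => by by_cases hj : j ∈ Ωᶜ <;> simp [G, hj]
    _ = ∑ n ∈ A, ∑' j, Ωᶜ.indicator (g n) j :=
        Summable.tsum_finsetSum fun n hn => (hg n hn).summable.indicator _
    _ ≤ ∑ n ∈ A, η := Finset.sum_le_sum fun n hn =>
        (Summable.tsum_le_tsum
          (fun j => Set.indicator_le_indicator (f := g n) (g := fun j => |g n j|) (le_abs_self _))
          ((hg n hn).summable.indicator _) ((hg n hn).summable.abs.indicator _)).trans (hsmall n hn)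
    _ = A.card * η := by simp
  have hsplit : ∑' j, G j = ∑' j, Ω.indicator G j + ∑' j, Ωᶜ.indicator G j :=
    (tsum_congr fun j => (congrFun (Set.indicator_self_add_compl Ω G) j).symm).trans
      ((hG.summable.indicator _).tsum_add (hG.summable.indicator _))
  calc A.card * (1 - η) ≤ ∑' j, Ω.indicator G j := by
        rw [hG.tsum_eq] at hsplit
        linarith
    _ ≤ ∑' j, Ω.indicator (fun j => |G j|) j :=
        Summable.tsum_le_tsum (fun j => Set.indicator_le_indicator (le_abs_self _))
          (hG.summable.indicator _) (hG.summable.abs.indicator _)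

lemma rpow_one_sub_mul_rpow_eq {k c : ℝ} (hp : p < 1) (hk : 0 < k) (hc : 0 < c) :
    (k * (k / c) ^ (p / (1 - p))) ^ (1 - p) * c ^ p = k := by
  have h1p : 1 - p ≠ 0 := by linarith
  rw [Real.mul_rpow hk.le (by positivity), ← Real.rpow_mul (by positivity),
    div_mul_cancel₀ _ h1p, Real.div_rpow hk.le hc.le, mul_assoc, div_mul_cancel₀ _ (by positivity),
    ← Real.rpow_add hk, sub_add_cancel, Real.rpow_one]

/-- Lemma 3.4 of the paper, instantiated in `ℓ_p` (`0<p<1`): with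
`ε = (C-1)/(C·a·b)` and `δ = ((C-1)/C)·ε^(p/(1-p))`, for any finite family
`(x_n, x_n^*)_{n ∈ A}` with `x_n^*(x_n) = 1`, `‖x_n‖_p ≤ a`, `‖x_n^*‖ ≤ b`,
one has `|A| ≤ C · ∑_{j ∈ Ω_δ} |∑_{n ∈ A} x_n^*(e_j)·x_n(j)|`. -/
theorem stmt2 (p a b C : ℝ) (hp0 : 0 < p) (hp1 : p < 1)
    (ha : 0 < a) (hb : 0 < b) (hC : 1 < C)
    (A : Finset ℕ) (x : ℕ → ℕ → ℝ) (xs : ℕ → (ℕ → ℝ) → ℝ)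
    (hxmem : ∀ n ∈ A, MemLpSeq p (x n))
    (hxnorm : ∀ n ∈ A, pNorm p (x n) ≤ a)
    (hadd : ∀ n ∈ A, ∀ f g : ℕ → ℝ, MemLpSeq p f → MemLpSeq p g →
      xs n (f + g) = xs n f + xs n g)
    (hsmul : ∀ n ∈ A, ∀ (c : ℝ) (f : ℕ → ℝ), MemLpSeq p f →
      xs n (fun j => c * f j) = c * xs n f)
    (hbdd : ∀ n ∈ A, ∀ f : ℕ → ℝ, MemLpSeq p f → |xs n f| ≤ b * pNorm p f)
    (hone : ∀ n ∈ A, xs n (x n) = 1) :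
    (A.card : ℝ) ≤ C * ∑' j : ℕ,
      Set.indicator
        {j : ℕ | ∃ n ∈ A,
          ((C - 1) / C) * ((C - 1) / (C * a * b)) ^ (p / (1 - p)) ≤ |xs n (unitVec j) * x n j|}
        (fun j => |∑ n ∈ A, xs n (unitVec j) * x n j|) j := by
  have hC0 : 0 < C := by linarith
  set δ := ((C - 1) / C) * ((C - 1) / (C * a * b)) ^ (p / (1 - p)) with hδ
  set Ω := {j : ℕ | ∃ n ∈ A, δ ≤ |xs n (unitVec j) * x n j|}
  have hk : 0 < (C - 1) / C := div_pos (by linarith) hC0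
  have hδ0 : 0 < δ := by positivity
  have hxs_unitVec : ∀ n ∈ A, ∀ j, |xs n (unitVec j)| ≤ b := fun n hn j => by
    simpa [pNorm_unitVec hp0] using hbdd n hn _ (memLpSeq_unitVec hp0 j)
  have hsum : ∀ n ∈ A, HasSum (fun j => xs n (unitVec j) * x n j) 1 := fun n hn =>
    hone n hn ▸ hasSum_apply_unitVec_mul hp0 (hadd n hn) (hsmul n hn) (hbdd n hn) (hxmem n hn)
  have hsmall : ∀ n ∈ A,
      ∑' j, Ωᶜ.indicator (fun j => |xs n (unitVec j) * x n j|) j ≤ (C - 1) / C := fun n hn => calc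
    _ ≤ δ ^ (1 - p) * ∑' j, |xs n (unitVec j) * x n j| ^ p :=
        tsum_indicator_abs_le_rpow_mul (s := Ωᶜ) hp1.le
          ((hxmem n hn).mul_of_abs_le hp0.le (hxs_unitVec n hn)) hδ0.le
          fun j hj => (not_le.1 fun h => hj ⟨n, hn, h⟩).le
    _ ≤ δ ^ (1 - p) * (b * pNorm p (x n)) ^ p := by
        gcongr
        exact tsum_abs_mul_rpow_le hp0 (hxs_unitVec n hn) (hxmem n hn)
    _ ≤ δ ^ (1 - p) * (a * b) ^ p := by
        rw [mul_comm a]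
        gcongr
        exacts [mul_nonneg hb.le (pNorm_nonneg _), hxnorm n hn]
    _ = (C - 1) / C := by
        rw [hδ, mul_assoc C, ← div_div]
        exact rpow_one_sub_mul_rpow_eq hp1 hk (by positivity)
  have hcard := card_mul_one_sub_le_tsum_indicator Ω hsum hsmall
  rw [show 1 - (C - 1) / C = C⁻¹ by field_simp; ring, ← div_eq_mul_inv, div_le_iff₀ hC0] at hcard
  linarith
end

section
/- Let X be a GT space and let (x_n)_{n∈ℕ} together with (x_n*)_{n∈ℕ} be a quasi-greedy basis of X. Then the basis is democratic, and there exist constants 0<c≤C<∞ such that c·m ≤ φ_l(m) and φ_u(m) ≤ C·m for every m ≥ 1. -/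
open scoped BigOperators ENNReal

/-- `X` is a GT space: every bounded operator into `ℓ_2` is absolutely summing,
with the absolutely summing norm controlled by `D·‖T‖`. -/
def IsGTSpace (X : Type*) [NormedAddCommGroup X] [NormedSpace ℝ X] : Prop :=
  ∃ D : ℝ, ∀ T : X →L[ℝ] lp (fun _ : ℕ => ℝ) 2, ∀ (B : Finset ℕ) (f : ℕ → X),
    ∃ ε : ℕ → ℝ, (∀ k, ε k = 1 ∨ ε k = -1) ∧
      ∑ k ∈ B, ‖T (f k)‖ ≤ D * ‖T‖ * ‖∑ k ∈ B, ε k • f k‖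

/-- `A` is a greedy set for the coefficient sequence `coef`. -/
def GreedySet (coef : ℕ → ℝ) (A : Finset ℕ) : Prop :=
  ∀ n ∈ A, ∀ k ∉ A, |coef k| ≤ |coef n|

/-- `(x_n)` together with bounded linear functionals `(x_n^*)` is a
(semi-normalized, fundamental, M-bounded Markushevich) basis of `X`. -/
structure IsXBasis {X : Type*} [NormedAddCommGroup X] [NormedSpace ℝ X]
    (x : ℕ → X) (xs : ℕ → X →L[ℝ] ℝ) : Prop where
  biorth : ∀ m n, xs m (x n) = if m = n then (1 : ℝ) else 0
  dense : ∀ f : X, ∀ ε > 0, ∃ (A : Finset ℕ) (c : ℕ → ℝ), ‖f - ∑ n ∈ A, c n • x n‖ < ε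
  norm_lb : ∃ c > 0, ∀ n, c ≤ ‖x n‖
  norm_ub : ∃ C : ℝ, ∀ n, ‖x n‖ ≤ C
  dual_ub : ∃ b : ℝ, ∀ n, ‖xs n‖ ≤ b

/-- The sign function, with the convention `sgn 0 = 1`. -/
noncomputable def sgn (a : ℝ) : ℝ := if a = 0 then 1 else a / |a|

/-- The basis has the bounded restricted truncation operator property:
`‖U(f,A)‖ ≤ C₀·‖f‖` for every greedy set `A` of `f`, where
`U(f,A) = (min_{n∈A} |x_n^*(f)|)·∑_{n∈A} sgn(x_n^*(f))·x_n`. -/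
def BRTP {X : Type*} [NormedAddCommGroup X] [NormedSpace ℝ X]
    (x : ℕ → X) (xs : ℕ → X →L[ℝ] ℝ) : Prop :=
  ∃ C₀ ≥ (1 : ℝ), ∀ (f : X) (A : Finset ℕ) (h : A.Nonempty),
    GreedySet (fun n => xs n f) A →
    ‖(A.inf' h fun n => |xs n f|) • ∑ n ∈ A, sgn (xs n f) • x n‖ ≤ C₀ * ‖f‖

/-- The basis is quasi-greedy: greedy projections are uniformly bounded. -/
def QuasiGreedyX {X : Type*} [NormedAddCommGroup X] [NormedSpace ℝ X]
    (x : ℕ → X) (xs : ℕ → X →L[ℝ] ℝ) : Prop :=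
  ∃ C₀ ≥ (1 : ℝ), ∀ (f : X) (A : Finset ℕ), GreedySet (fun n => xs n f) A →
    ‖∑ n ∈ A, xs n f • x n‖ ≤ C₀ * ‖f‖

/-!
Quasi-greediness with constant `C₀` controls vectors of constant modulus: changing signs costs a
factor `2C₀`, and `t‖1_B‖ ≤ 4C₀²‖f‖` whenever `B` is a greedy set of `f` with `|x_n*(f)| ≥ t`
on `B`. Given a lower bound `‖1_A‖ ≥ p(|A|)`, the latter bounds the `j`-th largest coefficient
of `f` by `4C₀²‖f‖ / p(j)`, so the coordinate map `T_A f = (x_k*(f))_{k ∈ A}` into `ℓ₂` has norm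
at most `4C₀² (∑_{j ≤ |A|} p(j)⁻²)^{1/2}`. The GT inequality for `T_A` and `(x_k)_{k ∈ A}` then
reads `|A| ≤ D ‖T_A‖ · 2C₀ ‖1_A‖`, an improved lower bound. Starting from `‖1_A‖ ≳ 1`, three
rounds raise the exponent of `|A|` to `1/2`, `3/4` and `1`; the upper bound `‖1_A‖ ≤ C|A|` is
the triangle inequality.
-/

open Finset

def IsGTSpaceWith (X : Type*) [NormedAddCommGroup X] [NormedSpace ℝ X] (D : ℝ) : Prop :=
  ∀ T : X →L[ℝ] lp (fun _ : ℕ => ℝ) 2, ∀ (B : Finset ℕ) (f : ℕ → X),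
    ∃ ε : ℕ → ℝ, (∀ k, ε k = 1 ∨ ε k = -1) ∧
      ∑ k ∈ B, ‖T (f k)‖ ≤ D * ‖T‖ * ‖∑ k ∈ B, ε k • f k‖

theorem IsGTSpace.exists_nonneg {X : Type*} [NormedAddCommGroup X] [NormedSpace ℝ X]
    (h : IsGTSpace X) : ∃ D, 0 ≤ D ∧ IsGTSpaceWith X D := by
  obtain ⟨D, hD⟩ := h
  refine ⟨max D 0, le_max_right _ _, fun T B f => ?_⟩
  obtain ⟨ε, hε, hineq⟩ := hD T B f
  exact ⟨ε, hε, hineq.trans (by gcongr; exact le_max_left _ _)⟩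

def IsQuasiGreedyWith {X : Type*} [NormedAddCommGroup X] [NormedSpace ℝ X]
    (x : ℕ → X) (xs : ℕ → X →L[ℝ] ℝ) (C₀ : ℝ) : Prop :=
  ∀ (f : X) (A : Finset ℕ), GreedySet (fun n => xs n f) A →
    ‖∑ n ∈ A, xs n f • x n‖ ≤ C₀ * ‖f‖

theorem abs_sgn (a : ℝ) : |sgn a| = 1 := by
  unfold sgn
  split_ifs with h
  · exact abs_one
  · rw [abs_div, abs_abs, div_self (abs_ne_zero.mpr h)]

theorem GreedySet.of_subset_of_abs_eq {coef : ℕ → ℝ} {A A' : Finset ℕ} {t : ℝ}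
    (hA : ∀ n ∈ A, |coef n| = t) (hle : ∀ n, |coef n| ≤ t) (h : A' ⊆ A) :
    GreedySet coef A' :=
  fun n hn k _ => (hle k).trans_eq (hA n (h hn)).symm

theorem GreedySet.of_mem_iff_le_abs {coef : ℕ → ℝ} {A : Finset ℕ} {t : ℝ}
    (hA : ∀ n, n ∈ A ↔ t ≤ |coef n|) : GreedySet coef A :=
  fun n hn k hk => (not_le.mp (mt (hA k).2 hk)).le.trans ((hA n).1 hn)

-- `h` bounds the `j`-th largest value of `g` by `M / w j`.
theorem sum_sq_le_of_mul_le {g w : ℕ → ℝ} {M : ℝ} (hg : ∀ k, 0 ≤ g k)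
    (hw : ∀ j, 1 ≤ j → 0 < w j)
    (h : ∀ A : Finset ℕ, ∀ k ∈ A, (∀ j ∈ A, g k ≤ g j) → g k * w A.card ≤ M)
    (A : Finset ℕ) :
    ∑ k ∈ A, g k ^ 2 ≤ M ^ 2 * ∑ j ∈ Icc 1 A.card, (w j)⁻¹ ^ 2 := by
  induction A using induction_on_min_value g with
  | empty => simp
  | insert a A haA hmin ih =>
    have hpos : 0 < w (A.card + 1) := hw _ le_add_self
    have ha : g a ≤ M * (w (A.card + 1))⁻¹ := by
      rw [← div_eq_mul_inv, le_div_iff₀ hpos, ← card_insert_of_notMem haA]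
      exact h _ a (mem_insert_self a A) (by simpa [mem_insert] using hmin)
    rw [sum_insert haA, card_insert_of_notMem haA, sum_Icc_succ_top le_add_self, mul_add]
    nlinarith [pow_le_pow_left₀ (hg a) ha 2]

theorem sum_Icc_inv_le_two_mul_sqrt (m : ℕ) : ∑ j ∈ Icc 1 m, (j : ℝ)⁻¹ ≤ 2 * √m := by
  induction m with
  | zero => simp
  | succ m ih =>
    rw [sum_Icc_succ_top le_add_self]
    set u := √(m : ℝ)
    set v := √((m + 1 : ℕ) : ℝ)
    have hu : u ^ 2 = m := Real.sq_sqrt m.cast_nonneg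
    have hv : v ^ 2 = (m + 1 : ℕ) := Real.sq_sqrt (Nat.cast_nonneg _)
    have hv1 : 1 ≤ v := Real.one_le_sqrt.mpr (by simp)
    have huv : u ≤ v := Real.sqrt_le_sqrt (by simp)
    -- `1/v² ≤ 1/v ≤ 2/(u+v) = 2(v-u)`, as `v² - u² = 1`
    have hstep : ((m + 1 : ℕ) : ℝ)⁻¹ ≤ 2 * (v - u) := by
      rw [← hv, inv_le_iff_one_le_mul₀ (by positivity)]
      push_cast at hv
      nlinarith [Real.sqrt_nonneg (m : ℝ)]
    linarith

noncomputable def coordMap {X : Type*} [NormedAddCommGroup X] [NormedSpace ℝ X]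
    (xs : ℕ → X →L[ℝ] ℝ) (A : Finset ℕ) : X →L[ℝ] lp (fun _ : ℕ => ℝ) 2 :=
  ∑ k ∈ A, (xs k).smulRight (lp.single 2 k 1)

section Basis

variable {X : Type*} [NormedAddCommGroup X] [NormedSpace ℝ X] {x : ℕ → X}
  {xs : ℕ → X →L[ℝ] ℝ} {C₀ D : ℝ}

theorem coord_sum_smul (hb : ∀ m n, xs m (x n) = if m = n then (1 : ℝ) else 0)
    (c : ℕ → ℝ) (A : Finset ℕ) (k : ℕ) :
    xs k (∑ n ∈ A, c n • x n) = if k ∈ A then c k else 0 := by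
  simp [map_sum, hb]

theorem norm_sum_smul_le_of_abs_eq_one (hb : ∀ m n, xs m (x n) = if m = n then (1 : ℝ) else 0)
    (hq : IsQuasiGreedyWith x xs C₀) {A : Finset ℕ} {ε η : ℕ → ℝ}
    (hε : ∀ n ∈ A, |ε n| = 1) (hη : ∀ n ∈ A, |η n| = 1) :
    ‖∑ n ∈ A, ε n • x n‖ ≤ 2 * C₀ * ‖∑ n ∈ A, η n • x n‖ := by
  set g := ∑ n ∈ A, η n • x n
  have hcoef := coord_sum_smul hb η A
  have hgreedy : ∀ A' ⊆ A, GreedySet (fun n => xs n g) A' :=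
    fun A' => GreedySet.of_subset_of_abs_eq (t := 1)
      (fun n hn => by simp [g, hcoef, hn, hη n hn])
      (fun n => by by_cases hn : n ∈ A <;> simp [g, hcoef, hn, hη n])
  have hproj : ∀ A' ⊆ A, ∑ n ∈ A', xs n g • x n = ∑ n ∈ A', η n • x n :=
    fun A' h => sum_congr rfl fun n hn => by rw [hcoef, if_pos (h hn)]
  have hsplit : ∑ n ∈ A, ε n • x n
      = ∑ n ∈ A.filter (fun n => ε n = η n), η n • x n
        - ∑ n ∈ A.filter (fun n => ε n ≠ η n), η n • x n := by
    rw [← sum_filter_add_sum_filter_not A (fun n => ε n = η n), sub_eq_add_neg,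
      ← sum_neg_distrib]
    congr 1
    · exact sum_congr rfl fun n hn => by rw [(mem_filter.mp hn).2]
    · refine sum_congr rfl fun n hn => ?_
      obtain ⟨hnA, hne⟩ := mem_filter.mp hn
      have : ε n = -η n := (abs_eq_abs.mp ((hε n hnA).trans (hη n hnA).symm)).resolve_left hne
      rw [this, neg_smul]
  calc ‖∑ n ∈ A, ε n • x n‖
      ≤ ‖∑ n ∈ A.filter (fun n => ε n = η n), xs n g • x n‖
        + ‖∑ n ∈ A.filter (fun n => ε n ≠ η n), xs n g • x n‖ := by
        rw [hsplit, hproj _ (filter_subset _ _), hproj _ (filter_subset _ _)]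
        exact norm_sub_le _ _
    _ ≤ C₀ * ‖g‖ + C₀ * ‖g‖ :=
        add_le_add (hq g _ (hgreedy _ (filter_subset _ _))) (hq g _ (hgreedy _ (filter_subset _ _)))
    _ = 2 * C₀ * ‖g‖ := by ring

theorem norm_sum_smul_coord_smul_sdiff_le (hq : IsQuasiGreedyWith x xs C₀) (hC₀ : 0 ≤ C₀)
    {f : X} {G C : Finset ℕ} (hG : GreedySet (fun n => xs n f) G)
    (hC : GreedySet (fun n => xs n f) C) (hCG : C ⊆ G) {b : ℕ → ℝ} {S : ℝ}
    (hb0 : ∀ n ∈ G \ C, 0 ≤ b n) (hbS : ∀ n ∈ G \ C, b n ≤ S) (hS : 0 ≤ S)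
    (hanti : ∀ n ∈ G \ C, ∀ k ∈ G \ C, |xs n f| ≤ |xs k f| → b k ≤ b n) :
    ‖∑ n ∈ G \ C, b n • xs n f • x n‖ ≤ 2 * C₀ * S * ‖f‖ := by
  obtain ⟨m, hm⟩ : ∃ m, (G \ C).card = m := ⟨_, rfl⟩
  induction m generalizing C b S with
  | zero =>
    rw [card_eq_zero.mp hm, sum_empty, norm_zero]
    positivity
  | succ m ih =>
    -- Abel summation: peel off the largest coefficient `n₁`, which carries the smallest weight.
    obtain ⟨n₁, hn₁, hmax⟩ :=
      exists_max_image (G \ C) (fun n => |xs n f|) (card_pos.mp (by omega))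
    obtain ⟨hn₁G, hn₁C⟩ := mem_sdiff.mp hn₁
    have hC' : GreedySet (fun n => xs n f) (insert n₁ C) := by
      intro n hn k hk
      rw [mem_insert, not_or] at hk
      rcases mem_insert.mp hn with rfl | hn
      · by_cases hkG : k ∈ G
        · exact hmax k (mem_sdiff.mpr ⟨hkG, hk.2⟩)
        · exact hG n hn₁G k hkG
      · exact hC n hn k hk.2
    have hdiff : G \ insert n₁ C = (G \ C).erase n₁ := sdiff_insert G C n₁
    have hmem : ∀ n ∈ G \ insert n₁ C, n ∈ G \ C := fun n hn =>
      mem_of_mem_erase (hdiff ▸ hn)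
    have hbmin : b n₁ ≤ S := hbS n₁ hn₁
    have hrest := ih hC' (insert_subset hn₁G hCG) (b := fun n => b n - b n₁) (S := S - b n₁)
      (fun n hn => sub_nonneg.mpr (hanti n (hmem n hn) n₁ hn₁ (hmax n (hmem n hn))))
      (fun n hn => sub_le_sub_right (hbS n (hmem n hn)) _) (sub_nonneg.mpr hbmin)
      (fun n hn k hk h => sub_le_sub_right (hanti n (hmem n hn) k (hmem k hk) h) _)
      (by rw [hdiff, card_erase_of_mem hn₁, hm, Nat.add_sub_cancel])
    have hsplit : ∑ n ∈ G \ C, b n • xs n f • x n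
        = b n₁ • ∑ n ∈ G \ C, xs n f • x n
          + ∑ n ∈ G \ insert n₁ C, (b n - b n₁) • xs n f • x n := by
      rw [hdiff, smul_sum, sum_erase _ (by simp), ← sum_add_distrib]
      exact sum_congr rfl fun n _ => by rw [sub_smul, add_sub_cancel]
    have hfull : ‖∑ n ∈ G \ C, xs n f • x n‖ ≤ 2 * C₀ * ‖f‖ := by
      rw [sum_sdiff_eq_sub hCG]
      linarith [norm_sub_le (∑ n ∈ G, xs n f • x n) (∑ n ∈ C, xs n f • x n), hq f G hG,
        hq f C hC]
    have hb₁ : 0 ≤ b n₁ := hb0 n₁ hn₁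
    calc ‖∑ n ∈ G \ C, b n • xs n f • x n‖
        ≤ b n₁ * (2 * C₀ * ‖f‖) + 2 * C₀ * (S - b n₁) * ‖f‖ := by
          rw [hsplit]
          refine (norm_add_le _ _).trans (add_le_add ?_ hrest)
          rw [norm_smul, Real.norm_of_nonneg hb₁]
          exact mul_le_mul_of_nonneg_left hfull hb₁
      _ = 2 * C₀ * S * ‖f‖ := by ring

theorem mul_norm_sum_le_of_le_abs_coord (hb : ∀ m n, xs m (x n) = if m = n then (1 : ℝ) else 0)
    (hq : IsQuasiGreedyWith x xs C₀) (hC₀ : 0 ≤ C₀) {f : X} {B : Finset ℕ}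
    (hB : GreedySet (fun n => xs n f) B) {t : ℝ} (ht : 0 ≤ t) (htB : ∀ n ∈ B, t ≤ |xs n f|) :
    t * ‖∑ n ∈ B, x n‖ ≤ 4 * C₀ ^ 2 * ‖f‖ := by
  rcases ht.eq_or_lt with rfl | htpos
  · rw [zero_mul]; positivity
  have hweight : ∀ n ∈ B, (t / |xs n f|) • xs n f • x n = t • sgn (xs n f) • x n := by
    intro n hn
    have hne : xs n f ≠ 0 := abs_pos.mp (htpos.trans_le (htB n hn))
    rw [smul_smul, smul_smul, sgn, if_neg hne]
    congr 1
    field_simp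
  have hunit := norm_sum_smul_le_of_abs_eq_one hb hq (A := B) (ε := fun _ => 1)
    (η := fun n => sgn (xs n f)) (fun _ _ => abs_one) (fun n _ => abs_sgn _)
  have htrunc := norm_sum_smul_coord_smul_sdiff_le hq hC₀ (C := ∅) (b := fun n => t / |xs n f|)
    (S := 1) hB (fun n hn => absurd hn (notMem_empty n)) (empty_subset B)
    (fun n _ => by positivity)
    (fun n hn => div_le_one_of_le₀ (htB n (by simpa using hn)) (abs_nonneg _)) zero_le_one
    (fun n hn k _ h => div_le_div_of_nonneg_left ht (htpos.trans_le (htB n (by simpa using hn))) h)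
  rw [sdiff_empty, sum_congr rfl hweight, ← smul_sum, norm_smul, Real.norm_of_nonneg ht] at htrunc
  simp only [one_smul] at hunit
  calc t * ‖∑ n ∈ B, x n‖ ≤ t * (2 * C₀ * ‖∑ n ∈ B, sgn (xs n f) • x n‖) :=
        mul_le_mul_of_nonneg_left hunit ht
    _ = 2 * C₀ * (t * ‖∑ n ∈ B, sgn (xs n f) • x n‖) := by ring
    _ ≤ 2 * C₀ * (2 * C₀ * 1 * ‖f‖) := mul_le_mul_of_nonneg_left htrunc (by positivity)
    _ = 4 * C₀ ^ 2 * ‖f‖ := by ring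

theorem finite_setOf_le_abs_coord (hbasis : IsXBasis x xs) (f : X) {t : ℝ} (ht : 0 < t) :
    {n | t ≤ |xs n f|}.Finite := by
  obtain ⟨b, hb⟩ := hbasis.dual_ub
  have hb0 : 0 ≤ b := (norm_nonneg _).trans (hb 0)
  obtain ⟨A, c, hA⟩ := hbasis.dense f (t / (b + 1)) (by positivity)
  refine A.finite_toSet.subset fun n hn => ?_
  by_contra hnA
  rw [mem_coe] at hnA
  have hcoef : xs n f = xs n (f - ∑ k ∈ A, c k • x k) := by
    rw [map_sub, coord_sum_smul hbasis.biorth, if_neg hnA, sub_zero]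
  have : |xs n f| < t := by
    rw [hcoef]
    calc |xs n (f - ∑ k ∈ A, c k • x k)| ≤ b * ‖f - ∑ k ∈ A, c k • x k‖ :=
          ((xs n).le_opNorm _).trans (mul_le_mul_of_nonneg_right (hb n) (norm_nonneg _))
      _ ≤ (b + 1) * ‖f - ∑ k ∈ A, c k • x k‖ := by gcongr; linarith
      _ < (b + 1) * (t / (b + 1)) := by gcongr
      _ = t := by field_simp
  exact (not_le.mpr this) hn

theorem mul_le_of_le_abs_coord (hbasis : IsXBasis x xs) (hq : IsQuasiGreedyWith x xs C₀)
    (hC₀ : 0 ≤ C₀) {p : ℕ → ℝ} (hpmono : Monotone p)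
    (hlow : ∀ A : Finset ℕ, A.Nonempty → p A.card ≤ ‖∑ n ∈ A, x n‖)
    {f : X} {A : Finset ℕ} (hA : A.Nonempty) {t : ℝ} (ht : 0 ≤ t)
    (htA : ∀ n ∈ A, t ≤ |xs n f|) :
    t * p A.card ≤ 4 * C₀ ^ 2 * ‖f‖ := by
  rcases ht.eq_or_lt with rfl | htpos
  · rw [zero_mul]; positivity
  set B := (finite_setOf_le_abs_coord hbasis f htpos).toFinset
  have hmemB : ∀ n, n ∈ B ↔ t ≤ |xs n f| := fun n => by simp [B]
  have hAB : A ⊆ B := fun n hn => (hmemB n).2 (htA n hn)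
  calc t * p A.card ≤ t * ‖∑ n ∈ B, x n‖ :=
        mul_le_mul_of_nonneg_left ((hpmono (card_le_card hAB)).trans (hlow B (hA.mono hAB))) ht
    _ ≤ 4 * C₀ ^ 2 * ‖f‖ := mul_norm_sum_le_of_le_abs_coord hbasis.biorth hq hC₀
        (GreedySet.of_mem_iff_le_abs hmemB) ht fun n hn => (hmemB n).1 hn

theorem coordMap_apply (A : Finset ℕ) (f : X) :
    coordMap xs A f = ∑ k ∈ A, lp.single 2 k (xs k f) := by
  simp [coordMap, ← lp.single_smul]

theorem norm_coordMap_apply_sq (A : Finset ℕ) (f : X) :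
    ‖coordMap xs A f‖ ^ 2 = ∑ k ∈ A, xs k f ^ 2 := by
  simpa [coordMap_apply] using
    lp.norm_sum_single (E := fun _ : ℕ => ℝ) (p := 2) (by norm_num) (fun k => xs k f) A

theorem norm_coordMap_apply_basis (hb : ∀ m n, xs m (x n) = if m = n then (1 : ℝ) else 0)
    {A : Finset ℕ} {j : ℕ} (hj : j ∈ A) : ‖coordMap xs A (x j)‖ = 1 := by
  rw [coordMap_apply, sum_eq_single_of_mem j hj fun k _ hkj => by simp [hb, hkj], hb, if_pos rfl,
    lp.norm_single (by norm_num), norm_one]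

theorem norm_coordMap_le (hbasis : IsXBasis x xs) (hq : IsQuasiGreedyWith x xs C₀)
    (hC₀ : 0 ≤ C₀) {p : ℕ → ℝ} (hp : ∀ j, 1 ≤ j → 0 < p j) (hpmono : Monotone p)
    (hlow : ∀ A : Finset ℕ, A.Nonempty → p A.card ≤ ‖∑ n ∈ A, x n‖) (A : Finset ℕ) :
    ‖coordMap xs A‖ ≤ 4 * C₀ ^ 2 * √(∑ j ∈ Icc 1 A.card, (p j)⁻¹ ^ 2) := by
  refine ContinuousLinearMap.opNorm_le_bound _ (by positivity) fun f => ?_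
  have hsq := sum_sq_le_of_mul_le (g := fun k => |xs k f|) (M := 4 * C₀ ^ 2 * ‖f‖)
    (fun _ => abs_nonneg _) hp
    (fun B k hk hmin =>
      mul_le_of_le_abs_coord hbasis hq hC₀ hpmono hlow ⟨k, hk⟩ (abs_nonneg _) hmin) A
  simp only [sq_abs] at hsq
  calc ‖coordMap xs A f‖ = √(∑ k ∈ A, xs k f ^ 2) := by
        rw [← norm_coordMap_apply_sq, Real.sqrt_sq (norm_nonneg _)]
    _ ≤ √((4 * C₀ ^ 2 * ‖f‖) ^ 2 * ∑ j ∈ Icc 1 A.card, (p j)⁻¹ ^ 2) := Real.sqrt_le_sqrt hsq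
    _ = 4 * C₀ ^ 2 * √(∑ j ∈ Icc 1 A.card, (p j)⁻¹ ^ 2) * ‖f‖ := by
        rw [Real.sqrt_mul (sq_nonneg _), Real.sqrt_sq (by positivity)]
        ring

theorem card_le_mul_sqrt_sum_mul_norm_sum (hGT : IsGTSpaceWith X D) (hD : 0 ≤ D)
    (hbasis : IsXBasis x xs) (hq : IsQuasiGreedyWith x xs C₀) (hC₀ : 0 ≤ C₀) {p : ℕ → ℝ}
    (hp : ∀ j, 1 ≤ j → 0 < p j) (hpmono : Monotone p)
    (hlow : ∀ A : Finset ℕ, A.Nonempty → p A.card ≤ ‖∑ n ∈ A, x n‖) (A : Finset ℕ) :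
    (A.card : ℝ) ≤ 8 * D * C₀ ^ 3 * √(∑ j ∈ Icc 1 A.card, (p j)⁻¹ ^ 2) * ‖∑ n ∈ A, x n‖ := by
  obtain ⟨ε, hε, hineq⟩ := hGT (coordMap xs A) A x
  have hsigns := norm_sum_smul_le_of_abs_eq_one hbasis.biorth hq (A := A) (ε := ε)
    (η := fun _ => 1) (fun k _ => by rcases hε k with h | h <;> simp [h]) (fun _ _ => abs_one)
  simp only [one_smul] at hsigns
  calc (A.card : ℝ) = ∑ k ∈ A, ‖coordMap xs A (x k)‖ := by
        rw [sum_congr rfl fun k hk => norm_coordMap_apply_basis hbasis.biorth hk]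
        simp
    _ ≤ D * ‖coordMap xs A‖ * ‖∑ k ∈ A, ε k • x k‖ := hineq
    _ ≤ D * (4 * C₀ ^ 2 * √(∑ j ∈ Icc 1 A.card, (p j)⁻¹ ^ 2)) * (2 * C₀ * ‖∑ n ∈ A, x n‖) := by
        gcongr
        exact norm_coordMap_le hbasis hq hC₀ hp hpmono hlow A
    _ = _ := by ring

theorem exists_mul_card_rpow_le_norm_sum (hGT : IsGTSpaceWith X D) (hD : 0 ≤ D)
    (hbasis : IsXBasis x xs) (hq : IsQuasiGreedyWith x xs C₀) (hC₀ : 0 ≤ C₀)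
    {c α β γ B : ℝ} (hc : 0 < c) (hα : 0 ≤ α) (hγ : β / 2 + γ = 1)
    (hsum : ∀ m : ℕ, 1 ≤ m → ∑ j ∈ Icc 1 m, ((j : ℝ) ^ (2 * α))⁻¹ ≤ B * (m : ℝ) ^ β)
    (hlow : ∀ A : Finset ℕ, A.Nonempty → c * (A.card : ℝ) ^ α ≤ ‖∑ n ∈ A, x n‖) :
    ∃ c' > 0, ∀ A : Finset ℕ, A.Nonempty → c' * (A.card : ℝ) ^ γ ≤ ‖∑ n ∈ A, x n‖ := by
  set K := 8 * D * C₀ ^ 3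
  have hB : 0 ≤ B := zero_le_one.trans (by simpa using hsum 1 le_rfl)
  -- `+ 1` keeps the denominator positive when `K = 0`
  refine ⟨c / (K * √B + 1), by positivity, fun A hA => ?_⟩
  set m : ℝ := (A.card : ℝ)
  set N := ‖∑ n ∈ A, x n‖
  have hm : 0 < m := Nat.cast_pos.mpr hA.card_pos
  have hround := card_le_mul_sqrt_sum_mul_norm_sum hGT hD hbasis hq hC₀
    (p := fun j => c * (j : ℝ) ^ α) (fun j hj => mul_pos hc (Real.rpow_pos_of_pos (by simpa) _))
    (fun i j hij => mul_le_mul_of_nonneg_left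
      (Real.rpow_le_rpow (Nat.cast_nonneg _) (Nat.cast_le.mpr hij) hα) hc.le) hlow A
  have hterm : ∀ j : ℕ, (c * (j : ℝ) ^ α)⁻¹ ^ 2 = (c ^ 2)⁻¹ * ((j : ℝ) ^ (2 * α))⁻¹ := by
    intro j
    rw [mul_inv, mul_pow, inv_pow, inv_pow, ← Real.rpow_two ((j : ℝ) ^ α),
      ← Real.rpow_mul (Nat.cast_nonneg j), mul_comm α]
  have hsqrt : √(∑ j ∈ Icc 1 A.card, (c * (j : ℝ) ^ α)⁻¹ ^ 2) ≤ c⁻¹ * √B * m ^ (β / 2) := by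
    calc _ ≤ √((c ^ 2)⁻¹ * (B * m ^ β)) := by
          refine Real.sqrt_le_sqrt ?_
          rw [sum_congr rfl fun j _ => hterm j, ← mul_sum]
          exact mul_le_mul_of_nonneg_left (hsum _ hA.card_pos) (by positivity)
      _ = c⁻¹ * √B * m ^ (β / 2) := by
          rw [Real.sqrt_mul (by positivity), Real.sqrt_mul hB, Real.sqrt_inv, Real.sqrt_sq hc.le,
            Real.sqrt_eq_rpow (m ^ β), ← Real.rpow_mul hm.le]
          ring_nf
  have hsplit : m = m ^ γ * m ^ (β / 2) := by
    rw [← Real.rpow_add hm, add_comm, hγ, Real.rpow_one]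
  have hcancel : c * m ^ γ * m ^ (β / 2) ≤ K * √B * N * m ^ (β / 2) :=
    calc c * m ^ γ * m ^ (β / 2) = c * m := by rw [mul_assoc, ← hsplit]
      _ ≤ c * (K * (c⁻¹ * √B * m ^ (β / 2)) * N) := by
          gcongr
          exact hround.trans (by gcongr)
      _ = K * √B * N * m ^ (β / 2) := by
          linear_combination K * √B * N * m ^ (β / 2) * mul_inv_cancel₀ hc.ne'
  have hmain := le_of_mul_le_mul_right hcancel (Real.rpow_pos_of_pos hm _)
  rw [div_mul_eq_mul_div, div_le_iff₀ (by positivity)]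
  linarith [norm_nonneg (∑ n ∈ A, x n)]

theorem exists_pos_le_norm_sum (hbasis : IsXBasis x xs) :
    ∃ c > 0, ∀ A : Finset ℕ, A.Nonempty → c ≤ ‖∑ n ∈ A, x n‖ := by
  obtain ⟨b, hb⟩ := hbasis.dual_ub
  have hb0 : 0 ≤ b := (norm_nonneg _).trans (hb 0)
  refine ⟨1 / (b + 1), by positivity, fun A ⟨n, hn⟩ => ?_⟩
  have hcoef : xs n (∑ k ∈ A, x k) = 1 := by
    simpa [hn] using coord_sum_smul hbasis.biorth (fun _ => 1) A n
  rw [div_le_iff₀ (by positivity)]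
  calc 1 = ‖xs n (∑ k ∈ A, x k)‖ := by rw [hcoef, norm_one]
    _ ≤ ‖xs n‖ * ‖∑ k ∈ A, x k‖ := (xs n).le_opNorm _
    _ ≤ ‖∑ k ∈ A, x k‖ * (b + 1) := by rw [mul_comm]; gcongr; linarith [hb n]

theorem exists_pos_mul_card_le_norm_sum (hGT : IsGTSpace X) (hbasis : IsXBasis x xs)
    (hqg : QuasiGreedyX x xs) : ∃ c > 0, ∀ A : Finset ℕ, c * A.card ≤ ‖∑ n ∈ A, x n‖ := by
  obtain ⟨D, hD, hGT⟩ := hGT.exists_nonneg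
  obtain ⟨C₀, hC₀, hq⟩ := hqg
  have hC₀' : 0 ≤ C₀ := zero_le_one.trans hC₀
  obtain ⟨c₀, hc₀, h₀⟩ := exists_pos_le_norm_sum hbasis
  obtain ⟨c₁, hc₁, h₁⟩ := exists_mul_card_rpow_le_norm_sum hGT hD hbasis hq hC₀'
    (α := 0) (β := 1) (γ := 1 / 2) (B := 1) hc₀ le_rfl (by norm_num)
    (fun m _ => by simp) (fun A hA => by simpa using h₀ A hA)
  obtain ⟨c₂, hc₂, h₂⟩ := exists_mul_card_rpow_le_norm_sum hGT hD hbasis hq hC₀'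
    (α := 1 / 2) (β := 1 / 2) (γ := 3 / 4) (B := 2) hc₁ (by norm_num) (by norm_num)
    (fun m _ => by simpa [Real.sqrt_eq_rpow] using sum_Icc_inv_le_two_mul_sqrt m) h₁
  obtain ⟨c₃, hc₃, h₃⟩ := exists_mul_card_rpow_le_norm_sum hGT hD hbasis hq hC₀'
    (α := 3 / 4) (β := 0) (γ := 1) (B := ∑' j : ℕ, ((j : ℝ) ^ (3 / 2 : ℝ))⁻¹) hc₂
    (by norm_num) (by norm_num) (fun m _ => by
      norm_num
      exact (Real.summable_nat_rpow_inv.mpr (by norm_num)).sum_le_tsum _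
        fun _ _ => by positivity) h₂
  refine ⟨c₃, hc₃, fun A => ?_⟩
  rcases A.eq_empty_or_nonempty with rfl | hA
  · simp
  · simpa using h₃ A hA

end Basis

theorem stmt12_general {X : Type*} [NormedAddCommGroup X] [NormedSpace ℝ X]
    (hGT : IsGTSpace X) (x : ℕ → X) (xs : ℕ → X →L[ℝ] ℝ)
    (hbasis : IsXBasis x xs) (hqg : QuasiGreedyX x xs) :
    (∃ D ≥ (1 : ℝ), ∀ A B : Finset ℕ, A.card = B.card →
        ‖∑ n ∈ A, x n‖ ≤ D * ‖∑ n ∈ B, x n‖) ∧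
      ∃ c C : ℝ, 0 < c ∧ c ≤ C ∧
        (∀ m : ℕ, 1 ≤ m → ∀ A : Finset ℕ, m ≤ A.card → c * (m : ℝ) ≤ ‖∑ n ∈ A, x n‖) ∧
        (∀ m : ℕ, 1 ≤ m → ∀ A : Finset ℕ, A.card ≤ m → ‖∑ n ∈ A, x n‖ ≤ C * (m : ℝ)) := by
  obtain ⟨c, hc, hlow⟩ := exists_pos_mul_card_le_norm_sum hGT hbasis hqg
  obtain ⟨C, hC⟩ := hbasis.norm_ub
  have hup : ∀ A : Finset ℕ, ‖∑ n ∈ A, x n‖ ≤ C * A.card := fun A =>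
    (norm_sum_le _ _).trans (by simpa [mul_comm] using sum_le_sum fun n (_ : n ∈ A) => hC n)
  have hcC : c ≤ C := by simpa using (hlow {0}).trans (hup {0})
  refine ⟨⟨C / c, (one_le_div hc).mpr hcC, fun A B hAB => ?_⟩, c, C, hc, hcC,
    fun m _ A hA => ?_, fun m _ A hA => ?_⟩
  · calc ‖∑ n ∈ A, x n‖ ≤ C * A.card := hup A
      _ = C / c * (c * B.card) := by rw [hAB]; field_simp
      _ ≤ C / c * ‖∑ n ∈ B, x n‖ := 
          mul_le_mul_of_nonneg_left (hlow B) (div_nonneg (hc.le.trans hcC) hc.le)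
  · exact (mul_le_mul_of_nonneg_left (by exact_mod_cast hA) hc.le).trans (hlow A)
  · exact (hup A).trans (mul_le_mul_of_nonneg_left (by exact_mod_cast hA) (hc.le.trans hcC))

/-- Quasi-greedy bases of GT spaces are democratic, with both democracy
functions of order `m`. -/
theorem stmt12 {X : Type*} [NormedAddCommGroup X] [NormedSpace ℝ X] [CompleteSpace X]
    (hGT : IsGTSpace X) (x : ℕ → X) (xs : ℕ → X →L[ℝ] ℝ)
    (hbasis : IsXBasis x xs) (hqg : QuasiGreedyX x xs) :
    (∃ D ≥ (1 : ℝ), ∀ A B : Finset ℕ, A.card = B.card →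
        ‖∑ n ∈ A, x n‖ ≤ D * ‖∑ n ∈ B, x n‖) ∧
      ∃ c C : ℝ, 0 < c ∧ c ≤ C ∧
        (∀ m : ℕ, 1 ≤ m → ∀ A : Finset ℕ, m ≤ A.card → c * (m : ℝ) ≤ ‖∑ n ∈ A, x n‖) ∧
        (∀ m : ℕ, 1 ≤ m → ∀ A : Finset ℕ, A.card ≤ m → ‖∑ n ∈ A, x n‖ ≤ C * (m : ℝ)) :=
  stmt12_general hGT x xs hbasis hqg
end
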